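/- Let ψ∈Nₙ, α∈Pₙ, γ∈Pₙ₊₁. If ¬⟨γ=↓[ψ]α⟩∧¬⟨γ≠↓[ψ]α⟩∧⟨γ⟩∧⟨↓[ψ]⟩ is XP-consistent, then ¬⟨α=α⟩ is a conjunct of ψ. -/

import Mathlib

attribute [local instance] Classical.propDecidable

mutual
inductive PathExpr (A : Type) : Type
  | eps : PathExpr A
  | down : PathExpr A
  | test : NodeExpr A → PathExpr A
  | comp : PathExpr A → PathExpr A → PathExpr A
  | union : PathExpr A → PathExpr A → PathExpr A

inductive NodeExpr (A : Type) : Type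
  | lab : A → NodeExpr A
  | neg : NodeExpr A → NodeExpr A
  | conj : NodeExpr A → NodeExpr A → NodeExpr A
  | diam : PathExpr A → NodeExpr A
  | eqTest : PathExpr A → PathExpr A → NodeExpr A
  | neqTest : PathExpr A → PathExpr A → NodeExpr A
end

namespace XPath

variable {A : Type}

/-- Defined disjunction `φ ∨ ψ := ¬(¬φ ∧ ¬ψ)`. -/
def nOr (φ ψ : NodeExpr A) : NodeExpr A := .neg (.conj (.neg φ) (.neg ψ))

/-- `⊤ := ⟨ε⟩`. -/
def topN : NodeExpr A := .diam .eps

/-- `⊥ := ¬⊤`. -/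
def botN : NodeExpr A := .neg topN

/-- `⊥̄ := [¬⟨ε⟩]`. -/
def botP : PathExpr A := .test (.neg (.diam .eps))

def bigOr (l : List (NodeExpr A)) : NodeExpr A := l.foldr nOr botN

def bigUnion (l : List (PathExpr A)) : PathExpr A := l.foldr PathExpr.union botP

/-- A data tree: a tree (connected, acyclic, unique parents except the root)
whose nodes carry labels from `A`, together with a partition of the nodes
(presented as an equivalence relation `eqd`). -/
structure DataTree (A : Type) where
  X : Type
  child : X → X → Prop
  root : X
  label : X → A
  eqd : X → X → Prop
  eqd_equiv : Equivalence eqd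
  parent_unique : ∀ ⦃x y z : X⦄, child x z → child y z → x = y
  root_no_parent : ∀ x : X, ¬ child x root
  reach : ∀ x : X, Relation.ReflTransGen child root x
  acyclic : ∀ x : X, ¬ Relation.TransGen child x x

mutual
/-- Semantics of path expressions. -/
def psem (T : DataTree A) : PathExpr A → T.X → T.X → Prop
  | .eps, x, y => x = y
  | .down, x, y => T.child x y
  | .test φ, x, y => x = y ∧ nsem T φ x
  | .comp α β, x, z => ∃ y, psem T α x y ∧ psem T β y z
  | .union α β, x, y => psem T α x y ∨ psem T β x y

/-- Semantics of node expressions. -/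
def nsem (T : DataTree A) : NodeExpr A → T.X → Prop
  | .lab a, x => T.label x = a
  | .neg φ, x => ¬ nsem T φ x
  | .conj φ ψ, x => nsem T φ x ∧ nsem T ψ x
  | .diam α, x => ∃ y, psem T α x y
  | .eqTest α β, x => ∃ y z, psem T α x y ∧ psem T β x z ∧ T.eqd y z
  | .neqTest α β, x => ∃ y z, psem T α x y ∧ psem T β x z ∧ ¬ T.eqd y z
end

/-- Semantic equivalence of node expressions: same denotation in every data tree. -/
def nodeValid (φ ψ : NodeExpr A) : Prop :=
  ∀ (T : DataTree A) (x : T.X), nsem T φ x ↔ nsem T ψ x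

/-- Semantic equivalence of path expressions: same denotation in every data tree. -/
def pathValid (α β : PathExpr A) : Prop :=
  ∀ (T : DataTree A) (x y : T.X), psem T α x y ↔ psem T β x y

mutual
/-- Derivability of node equivalences in the axiomatic system `XP`. -/
inductive NDer {A : Type} [Fintype A] : NodeExpr A → NodeExpr A → Prop
  | refl (φ : NodeExpr A) : NDer φ φ
  | symm {φ ψ : NodeExpr A} : NDer φ ψ → NDer ψ φ
  | trans {φ ψ ρ : NodeExpr A} : NDer φ ψ → NDer ψ ρ → NDer φ ρ
  | congr_neg {φ ψ : NodeExpr A} : NDer φ ψ → NDer (.neg φ) (.neg ψ)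
  | congr_conj {φ φ' ψ ψ' : NodeExpr A} :
      NDer φ φ' → NDer ψ ψ' → NDer (.conj φ ψ) (.conj φ' ψ')
  | congr_diam {α β : PathExpr A} : PDer α β → NDer (.diam α) (.diam β)
  | congr_eqTest {α α' β β' : PathExpr A} :
      PDer α α' → PDer β β' → NDer (.eqTest α β) (.eqTest α' β')
  | congr_neqTest {α α' β β' : PathExpr A} :
      PDer α α' → PDer β β' → NDer (.neqTest α β) (.neqTest α' β')
  | lbAx1 : NDer topN (bigOr ((Finset.univ : Finset A).toList.map NodeExpr.lab))
  | lbAx2 {a b : A} : a ≠ b → NDer botN (.conj (.lab a) (.lab b))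
  | ndAx1 (φ ψ : NodeExpr A) :
      NDer φ (nOr (.neg (nOr (.neg φ) ψ)) (.neg (nOr (.neg φ) (.neg ψ))))
  | ndAx2 (φ : NodeExpr A) : NDer (.diam (.test φ)) φ
  | ndAx3 (α β : PathExpr A) : NDer (.diam (.union α β)) (nOr (.diam α) (.diam β))
  | ndAx4 (α β : PathExpr A) : NDer (.diam (.comp α β)) (.diam (.comp α (.test (.diam β))))
  | eqAx1 (α β : PathExpr A) : NDer (.eqTest α β) (.eqTest β α)
  | eqAx2 (α β γ : PathExpr A) :
      NDer (.eqTest (.union α β) γ) (nOr (.eqTest α γ) (.eqTest β γ))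
  | eqAx3 (φ : NodeExpr A) (α β : PathExpr A) :
      NDer (.conj φ (.eqTest α β)) (.eqTest (.comp (.test φ) α) β)
  | eqAx4 (α β : PathExpr A) : NDer (nOr (.eqTest α β) (.diam α)) (.diam α)
  | eqAx5 (γ α β : PathExpr A) :
      NDer (nOr (.diam (.comp γ (.test (.eqTest α β)))) (.eqTest (.comp γ α) (.comp γ β)))
        (.eqTest (.comp γ α) (.comp γ β))
  | eqAx6 (α : PathExpr A) : NDer (.eqTest α α) (.diam α)
  | eqAx7 (α β : PathExpr A) :
      NDer (nOr (.conj (.eqTest α .eps) (.eqTest β .eps)) (.eqTest α β)) (.eqTest α β)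
  | eqAx8 (α β γ : PathExpr A) :
      NDer (nOr (.eqTest α (.comp β (.test (.eqTest .eps γ)))) (.eqTest α (.comp β γ)))
        (.eqTest α (.comp β γ))
  | neqAx1 (α β : PathExpr A) : NDer (.neqTest α β) (.neqTest β α)
  | neqAx2 (α β γ : PathExpr A) :
      NDer (.neqTest (.union α β) γ) (nOr (.neqTest α γ) (.neqTest β γ))
  | neqAx3 (φ : NodeExpr A) (α β : PathExpr A) :
      NDer (.conj φ (.neqTest α β)) (.neqTest (.comp (.test φ) α) β)
  | neqAx4 (α β : PathExpr A) : NDer (nOr (.neqTest α β) (.diam α)) (.diam α)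
  | neqAx5 (γ α β : PathExpr A) :
      NDer (nOr (.diam (.comp γ (.test (.neqTest α β)))) (.neqTest (.comp γ α) (.comp γ β)))
        (.neqTest (.comp γ α) (.comp γ β))
  | neqAx6 (α β γ η : PathExpr A) :
      NDer (nOr (.conj (.eqTest α γ) (.eqTest β η)) (nOr (.eqTest α β) (.neqTest γ η)))
        (nOr (.eqTest α β) (.neqTest γ η))
  | neqAx7 (α β γ η : PathExpr A) :
      NDer (nOr (.conj (.neqTest α γ) (.eqTest β η)) (nOr (.neqTest α β) (.neqTest γ η)))
        (nOr (.neqTest α β) (.neqTest γ η))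
  | neqAx8 (α β γ η : PathExpr A) :
      NDer (nOr (.eqTest γ (.comp η (.comp (.test (.conj (.neg (.eqTest α β)) (.diam α))) β)))
              (.neqTest γ (.comp η α)))
        (.neqTest γ (.comp η α))
  | neqAx9 (α β γ η : PathExpr A) :
      NDer (nOr (.neqTest γ (.comp η (.comp (.test (.conj (.neg (.neqTest α β)) (.diam α))) β)))
              (.neqTest γ (.comp η α)))
        (.neqTest γ (.comp η α))
  | neqAx10 (α β γ η : PathExpr A) :
      NDer (nOr (.eqTest γ (.comp η (.comp (.test (.conj (.neg (.neqTest α α)) (.eqTest α β))) α)))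
              (.eqTest γ (.comp η β)))
        (.eqTest γ (.comp η β))

/-- Derivability of path equivalences in the axiomatic system `XP`. -/
inductive PDer {A : Type} [Fintype A] : PathExpr A → PathExpr A → Prop
  | refl (α : PathExpr A) : PDer α α
  | symm {α β : PathExpr A} : PDer α β → PDer β α
  | trans {α β γ : PathExpr A} : PDer α β → PDer β γ → PDer α γ
  | congr_test {φ ψ : NodeExpr A} : NDer φ ψ → PDer (.test φ) (.test ψ)
  | congr_comp {α α' β β' : PathExpr A} :
      PDer α α' → PDer β β' → PDer (.comp α β) (.comp α' β')
  | congr_union {α α' β β' : PathExpr A} :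
      PDer α α' → PDer β β' → PDer (.union α β) (.union α' β')
  | prAx1 (α β : PathExpr A) : PDer (.comp (.comp α (.test (.neg (.diam β)))) β) botP
  | prAx2 : PDer (.test topN) (.eps : PathExpr A)
  | prAx3 (φ ψ : NodeExpr A) : PDer (.test (nOr φ ψ)) (.union (.test φ) (.test ψ))
  | isAx1 (α β γ : PathExpr A) : PDer (.union (.union α β) γ) (.union α (.union β γ))
  | isAx2 (α β : PathExpr A) : PDer (.union α β) (.union β α)
  | isAx3 (α : PathExpr A) : PDer (.union α α) α
  | isAx4 (α β γ : PathExpr A) : PDer (.comp α (.comp β γ)) (.comp (.comp α β) γ)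
  | isAx5l (α : PathExpr A) : PDer (.comp .eps α) α
  | isAx5r (α : PathExpr A) : PDer (.comp α .eps) α
  | isAx6l (α β γ : PathExpr A) :
      PDer (.comp α (.union β γ)) (.union (.comp α β) (.comp α γ))
  | isAx6r (α β γ : PathExpr A) :
      PDer (.comp (.union α β) γ) (.union (.comp α γ) (.comp β γ))
  | isAx7 (α : PathExpr A) : PDer (.union botP α) α
end

/-- A node expression is `XP`-consistent if it is not provably equivalent to `⊥`. -/
def NConsistent [Fintype A] (φ : NodeExpr A) : Prop := ¬ NDer φ botN

/-- A path expression is `XP`-consistent if it is not provably equivalent to `⊥̄`. -/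
def PConsistent [Fintype A] (α : PathExpr A) : Prop := ¬ PDer α botP

/-- The normal form `a ∧ ⋀_{d ∈ C} d ∧ ⋀_{d ∈ D∖C} ¬d`, built along the canonical listing `D`. -/
noncomputable def mkNF (a : A) (C D : List (NodeExpr A)) : NodeExpr A :=
  D.foldl (fun acc d => .conj acc (if d ∈ C then d else .neg d)) (.lab a)

/-- The canonical lists of normal-form path expressions (first component)
and normal-form node expressions (second component) at each level. -/
noncomputable def NF (A : Type) [Fintype A] : ℕ → List (PathExpr A) × List (NodeExpr A)
  | 0 =>
    ([.eps],
      (Finset.univ : Finset A).toList.map fun a =>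
        NodeExpr.conj (.conj (.lab a) (.eqTest .eps .eps)) (.neg (.neqTest .eps .eps)))
  | n+1 =>
    let P := (NF A n).1
    let N := (NF A n).2
    let P' : List (PathExpr A) :=
      .eps :: N.flatMap fun ψ => P.map fun β => PathExpr.comp .down (.comp (.test ψ) β)
    let D : List (NodeExpr A) :=
      (P'.flatMap fun α => P'.map fun β => NodeExpr.eqTest α β) ++
      (P'.flatMap fun α => P'.map fun β => NodeExpr.neqTest α β)
    let cands : List (NodeExpr A) :=
      D.sublists.flatMap fun C => (Finset.univ : Finset A).toList.map fun a => mkNF a C D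
    (P', cands.filter fun φ => decide (NConsistent φ))

/-- `Pₙ`: normal-form path expressions of level `n`. -/
noncomputable def Pnf (A : Type) [Fintype A] (n : ℕ) : Set (PathExpr A) :=
  {α | α ∈ (NF A n).1}

/-- `Nₙ`: normal-form node expressions of level `n`. -/
noncomputable def Nnf (A : Type) [Fintype A] (n : ℕ) : Set (NodeExpr A) :=
  {φ | φ ∈ (NF A n).2}

/-- `Dₙ`: data-aware diamonds between normal-form paths of level `n`. -/
noncomputable def Dnf (A : Type) [Fintype A] (n : ℕ) : Set (NodeExpr A) :=
  {φ | ∃ α ∈ Pnf A n, ∃ β ∈ Pnf A n, φ = NodeExpr.eqTest α β ∨ φ = NodeExpr.neqTest α β}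

/-- The conjuncts of a node expression (flattening `∧`). -/
def conjuncts : NodeExpr A → List (NodeExpr A)
  | .conj φ ψ => conjuncts φ ++ conjuncts ψ
  | φ => [φ]

/-- `δ` is a conjunct of `ψ`. -/
def IsConjunct (δ ψ : NodeExpr A) : Prop := δ ∈ conjuncts ψ

/-- Length of a path expression. -/
def plen : PathExpr A → ℕ
  | .eps => 0
  | .down => 1
  | .test _ => 0
  | .comp α β => plen α + plen β
  | .union α β => max (plen α) (plen β)

mutual
/-- Downward depth of a node expression. -/
def ndd : NodeExpr A → ℕ
  | .lab _ => 0
  | .neg φ => ndd φ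
  | .conj φ ψ => max (ndd φ) (ndd ψ)
  | .diam α => pdd α
  | .eqTest α β => max (pdd α) (pdd β)
  | .neqTest α β => max (pdd α) (pdd β)

/-- Downward depth of a path expression. -/
def pdd : PathExpr A → ℕ
  | .eps => 0
  | .down => 1
  | .test φ => ndd φ
  | .comp α β => max (max (pdd α) (pdd β)) (plen α + pdd β)
  | .union α β => max (pdd α) (pdd β)
end

/-- The path `↓[ψ₁]…↓[ψ_k]α`. -/
def prefixPath : List (NodeExpr A) → PathExpr A → PathExpr A
  | [], α => α
  | ψ :: l, α => .comp .down (.comp (.test ψ) (prefixPath l α))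

/-- The path `↓[ψ]α`. -/
def dPath (ψ : NodeExpr A) (α : PathExpr A) : PathExpr A :=
  .comp .down (.comp (.test ψ) α)

/-- A path expression whose leftmost symbol is `↓`. -/
def startsWithDown : PathExpr A → Prop
  | .down => True
  | .comp α _ => startsWithDown α
  | _ => False

/-- The subtree of `T` hanging from `x`, with the restricted partition. -/
def DataTree.restrict (T : DataTree A) (x : T.X) : DataTree A where
  X := {y : T.X // Relation.ReflTransGen T.child x y}
  child y z := T.child y.1 z.1
  root := ⟨x, Relation.ReflTransGen.refl⟩
  label y := T.label y.1
  eqd y z := T.eqd y.1 z.1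
  eqd_equiv :=
    ⟨fun y => T.eqd_equiv.refl y.1, fun h => T.eqd_equiv.symm h,
      fun h h' => T.eqd_equiv.trans h h'⟩
  parent_unique := by
    intro a b c hac hbc
    exact Subtype.ext (T.parent_unique hac hbc)
  root_no_parent := by
    intro y hy
    exact T.acyclic x (Relation.TransGen.tail' y.2 hy)
  reach := by
    rintro ⟨y, hy⟩
    induction hy with
    | refl => exact Relation.ReflTransGen.refl
    | @tail b c hxb hbc ih => exact Relation.ReflTransGen.tail (ih) hbc
  acyclic := by
    rintro y hy
    have key : ∀ a b : {y : T.X // Relation.ReflTransGen T.child x y},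
        Relation.TransGen (fun y z : {y : T.X // Relation.ReflTransGen T.child x y} =>
          T.child y.1 z.1) a b → Relation.TransGen T.child a.1 b.1 := by
      intro a b hab
      induction hab with
      | single h => exact Relation.TransGen.single h
      | tail _ h ih => exact Relation.TransGen.tail ih h
    exact T.acyclic y.1 (key y y hy)

end XPath

/-!
A normal form `ψ ∈ Nₙ` decides every `⟨α = α⟩` with `α ∈ Pₙ`: it is a conjunct of `ψ` or its
negation is (at level `0` only `α = ε` occurs and `⟨ε = ε⟩` is a conjunct). If it occurs
positively, then `ψ ≤ ⟨α = α⟩ ≡ ⟨α⟩`, hence `⟨↓[ψ]⟩ ≡ ⟨↓[ψ]α⟩`. But `⟨γ⟩ ∧ ⟨δ⟩ ≤ ⟨γ = δ⟩ ∨ ⟨γ ≠ δ⟩`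
(an instance of the scheme `⟨α=γ⟩ ∧ ⟨β=η⟩ ≤ ⟨α=β⟩ ∨ ⟨γ≠η⟩`), so with `δ = ↓[ψ]α` the formula
of the hypothesis is `XP`-inconsistent.
-/

namespace XPath

variable {A : Type}

theorem conjuncts_foldl_conj (g : NodeExpr A → NodeExpr A) (l : List (NodeExpr A))
    (φ : NodeExpr A) :
    conjuncts (l.foldl (fun acc d => .conj acc (g d)) φ) =
      conjuncts φ ++ l.flatMap fun d => conjuncts (g d) := by
  induction l generalizing φ with
  | nil => simp
  | cons d l ih => simp [ih, conjuncts]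

theorem isConjunct_mkNF_or_neg (a : A) (C : List (NodeExpr A)) {D : List (NodeExpr A)}
    {α β : PathExpr A} (hD : .eqTest α β ∈ D) :
    IsConjunct (.eqTest α β) (mkNF a C D) ∨ IsConjunct (.neg (.eqTest α β)) (mkNF a C D) := by
  unfold IsConjunct mkNF
  simp only [conjuncts_foldl_conj, List.mem_append, List.mem_flatMap]
  by_cases hC : NodeExpr.eqTest α β ∈ C
  · exact .inl (.inr ⟨_, hD, by simp [hC, conjuncts]⟩)
  · exact .inr (.inr ⟨_, hD, by simp [hC, conjuncts]⟩)

variable [Fintype A]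

theorem NDer.congr_nOr {φ φ' ψ ψ' : NodeExpr A} (h₁ : NDer φ φ') (h₂ : NDer ψ ψ') :
    NDer (nOr φ ψ) (nOr φ' ψ') :=
  .congr_neg (.congr_conj (.congr_neg h₁) (.congr_neg h₂))

-- Transfers the semiring laws of `∪` to `∨`.
theorem nOr_der_diam_union (φ ψ : NodeExpr A) :
    NDer (nOr φ ψ) (.diam (.union (.test φ) (.test ψ))) :=
  (NDer.ndAx2 _).symm.trans (.congr_diam (.prAx3 φ ψ))

theorem nOr_comm (φ ψ : NodeExpr A) : NDer (nOr φ ψ) (nOr ψ φ) :=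
  (nOr_der_diam_union φ ψ).trans ((NDer.congr_diam (.isAx2 _ _)).trans (nOr_der_diam_union ψ φ).symm)

theorem nOr_self (φ : NodeExpr A) : NDer (nOr φ φ) φ :=
  (nOr_der_diam_union φ φ).trans ((NDer.congr_diam (.isAx3 _)).trans (.ndAx2 φ))

theorem botN_nOr (φ : NodeExpr A) : NDer (nOr botN φ) φ :=
  (nOr_der_diam_union botN φ).trans ((NDer.congr_diam (.isAx7 _)).trans (.ndAx2 φ))

theorem nOr_assoc (φ ψ ρ : NodeExpr A) : NDer (nOr (nOr φ ψ) ρ) (nOr φ (nOr ψ ρ)) := by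
  have hl : NDer (nOr (nOr φ ψ) ρ) (.diam (.union (.union (.test φ) (.test ψ)) (.test ρ))) :=
    (nOr_der_diam_union _ _).trans (.congr_diam (.congr_union (.prAx3 φ ψ) (.refl _)))
  have hr : NDer (nOr φ (nOr ψ ρ)) (.diam (.union (.test φ) (.union (.test ψ) (.test ρ)))) :=
    (nOr_der_diam_union _ _).trans (.congr_diam (.congr_union (.refl _) (.prAx3 ψ ρ)))
  exact hl.trans ((NDer.congr_diam (.isAx1 _ _ _)).trans hr.symm)

/-- The paper's `φ ≤ ψ`. -/
def NLe (φ ψ : NodeExpr A) : Prop := NDer (nOr φ ψ) ψ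

namespace NLe

theorem refl (φ : NodeExpr A) : NLe φ φ := nOr_self φ

theorem of_der {φ ψ : NodeExpr A} (h : NDer φ ψ) : NLe φ ψ :=
  (NDer.congr_nOr h (.refl ψ)).trans (nOr_self ψ)

theorem congr {φ φ' ψ ψ' : NodeExpr A} (h₁ : NDer φ φ') (h₂ : NDer ψ ψ') (h : NLe φ ψ) :
    NLe φ' ψ' :=
  ((NDer.congr_nOr h₁.symm h₂.symm).trans h).trans h₂

theorem trans {φ ψ ρ : NodeExpr A} (h₁ : NLe φ ψ) (h₂ : NLe ψ ρ) : NLe φ ρ :=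
  (NDer.congr_nOr (.refl φ) h₂.symm).trans
    (((nOr_assoc φ ψ ρ).symm.trans (NDer.congr_nOr h₁ (.refl ρ))).trans h₂)

theorem trans_der {φ ψ ρ : NodeExpr A} (h₁ : NLe φ ψ) (h₂ : NDer ψ ρ) : NLe φ ρ :=
  h₁.trans (of_der h₂)

theorem antisymm {φ ψ : NodeExpr A} (h₁ : NLe φ ψ) (h₂ : NLe ψ φ) : NDer φ ψ :=
  (h₂.symm.trans (nOr_comm ψ φ)).trans h₁

end NLe

theorem nOr_le {φ ψ ρ : NodeExpr A} (h₁ : NLe φ ρ) (h₂ : NLe ψ ρ) : NLe (nOr φ ψ) ρ :=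
  ((nOr_assoc φ ψ ρ).trans (NDer.congr_nOr (.refl φ) h₂)).trans h₁

theorem botN_le (φ : NodeExpr A) : NLe botN φ := botN_nOr φ

theorem der_botN_of_le {φ : NodeExpr A} (h : NLe φ botN) : NDer φ botN :=
  h.antisymm (botN_le φ)

theorem eqTest_le_diam (α β : PathExpr A) : NLe (.eqTest α β) (.diam α) := NDer.eqAx4 α β

theorem conj_le_right (φ ψ : NodeExpr A) : NLe (.conj φ ψ) ψ := by
  have h : NDer (.conj φ ψ) (.eqTest (.test ψ) (.comp (.test φ) (.test ψ))) :=
    (NDer.congr_conj (.refl φ) ((NDer.ndAx2 ψ).symm.trans (NDer.eqAx6 _).symm)).trans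
      ((NDer.eqAx3 φ _ _).trans (.eqAx1 _ _))
  exact NLe.congr h.symm (.ndAx2 ψ) (eqTest_le_diam _ _)

theorem der_eqTest_test_eps (φ : NodeExpr A) : NDer φ (.eqTest (.test φ) .eps) := by
  have hconj : NDer (.conj φ (.eqTest .eps (.test φ))) φ :=
    (NDer.eqAx3 φ .eps (.test φ)).trans
      ((NDer.congr_eqTest (.isAx5r _) (.refl _)).trans ((NDer.eqAx6 _).trans (.ndAx2 φ)))
  have hle : NLe φ (.eqTest .eps (.test φ)) := NLe.congr hconj (.refl _) (conj_le_right φ _)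
  have hge : NLe (.eqTest .eps (.test φ)) φ :=
    NLe.congr (.eqAx1 _ _) (.ndAx2 φ) (eqTest_le_diam _ _)
  exact (hle.antisymm hge).trans (.eqAx1 _ _)

theorem conj_der_eqTest_test (φ ψ : NodeExpr A) :
    NDer (.conj φ ψ) (.eqTest (.test φ) (.test ψ)) :=
  (NDer.congr_conj (.refl φ) ((der_eqTest_test_eps ψ).trans (.eqAx1 _ _))).trans
    ((NDer.eqAx3 φ .eps _).trans (.congr_eqTest (.isAx5r _) (.refl _)))

theorem conj_comm (φ ψ : NodeExpr A) : NDer (.conj φ ψ) (.conj ψ φ) :=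
  (conj_der_eqTest_test φ ψ).trans ((NDer.eqAx1 _ _).trans (conj_der_eqTest_test ψ φ).symm)

theorem conj_self (φ : NodeExpr A) : NDer (.conj φ φ) φ :=
  (conj_der_eqTest_test φ φ).trans ((NDer.eqAx6 _).trans (.ndAx2 φ))

theorem conj_le_left (φ ψ : NodeExpr A) : NLe (.conj φ ψ) φ :=
  NLe.congr (conj_comm ψ φ) (.refl φ) (conj_le_right ψ φ)

theorem conj_nOr_distrib (φ ψ ρ : NodeExpr A) :
    NDer (.conj φ (nOr ψ ρ)) (nOr (.conj φ ψ) (.conj φ ρ)) :=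
  (conj_der_eqTest_test φ _).trans <|
  (NDer.congr_eqTest (.refl _) (.prAx3 ψ ρ)).trans <|
  (NDer.eqAx1 _ _).trans <|
  (NDer.eqAx2 _ _ _).trans <|
  NDer.congr_nOr ((NDer.eqAx1 _ _).trans (conj_der_eqTest_test φ ψ).symm)
    ((NDer.eqAx1 _ _).trans (conj_der_eqTest_test φ ρ).symm)

theorem conj_mono_right {ψ ρ : NodeExpr A} (φ : NodeExpr A) (h : NLe ψ ρ) :
    NLe (.conj φ ψ) (.conj φ ρ) :=
  (conj_nOr_distrib φ ψ ρ).symm.trans (.congr_conj (.refl φ) h)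

theorem conj_mono_left {ψ ρ : NodeExpr A} (φ : NodeExpr A) (h : NLe ψ ρ) :
    NLe (.conj ψ φ) (.conj ρ φ) :=
  NLe.congr (conj_comm φ ψ) (conj_comm φ ρ) (conj_mono_right φ h)

theorem le_conj {χ φ ψ : NodeExpr A} (h₁ : NLe χ φ) (h₂ : NLe χ ψ) : NLe χ (.conj φ ψ) :=
  NLe.congr (conj_self χ) (.refl _) ((conj_mono_left χ h₁).trans (conj_mono_right φ h₂))

theorem conj_der_diam_test_comp (φ ψ : NodeExpr A) :
    NDer (.conj φ ψ) (.diam (.comp (.test φ) (.test ψ))) := by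
  have hle : NLe (.conj φ ψ) (.diam (.comp (.test φ) (.test ψ))) :=
    NLe.congr ((NDer.congr_conj (.refl φ) (der_eqTest_test_eps ψ)).trans (.eqAx3 φ _ .eps)).symm
      (.refl _) (eqTest_le_diam _ _)
  have hge : NLe (.diam (.comp (.test φ) (.test ψ))) (.conj φ ψ) :=
    NLe.congr ((NDer.eqAx6 _).symm.trans (NDer.eqAx3 φ (.test ψ) _).symm).symm (.refl _)
      (conj_mono_right φ (NLe.congr (.refl _) (.ndAx2 ψ) (eqTest_le_diam _ _)))
  exact hle.antisymm hge

-- `¬φ ∧ φ` is the test-path `[¬⟨[φ]⟩][φ]`, which the predicate axiom collapses to `⊥̄`.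
theorem neg_conj_self (φ : NodeExpr A) : NDer (.conj (.neg φ) φ) botN := by
  have hpath : PDer (.comp (.test (.neg (.diam (.test φ)))) (.test φ)) botP :=
    (PDer.congr_comp (PDer.isAx5l _).symm (.refl _)).trans (.prAx1 .eps (.test φ))
  exact (NDer.congr_conj (.congr_neg (NDer.ndAx2 φ).symm) (NDer.ndAx2 φ).symm).trans <|
    (conj_der_diam_test_comp _ _).trans <|
    (NDer.ndAx4 _ _).symm.trans ((NDer.congr_diam hpath).trans (.ndAx2 botN))

theorem le_botN_of_le_neg {χ φ : NodeExpr A} (h₁ : NLe χ (.neg φ)) (h₂ : NLe χ φ) :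
    NLe χ botN :=
  (le_conj h₁ h₂).trans_der (neg_conj_self φ)

theorem le_of_le_nOr_of_le_neg {χ φ ψ : NodeExpr A} (h₁ : NLe χ (nOr φ ψ))
    (h₂ : NLe χ (.neg ψ)) : NLe χ φ := by
  have hsplit : NLe (.conj (.neg ψ) (nOr φ ψ)) (nOr (.conj (.neg ψ) φ) (.conj (.neg ψ) ψ)) :=
    .of_der (conj_nOr_distrib _ _ _)
  exact (le_conj h₂ h₁).trans <| hsplit.trans <|
    nOr_le (conj_le_right _ _) ((NLe.of_der (neg_conj_self ψ)).trans (botN_le φ))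

theorem diam_test_comp (φ : NodeExpr A) (α : PathExpr A) :
    NDer (.diam (.comp (.test φ) α)) (.conj φ (.diam α)) :=
  (NDer.ndAx4 _ _).trans (conj_der_diam_test_comp φ _).symm

theorem diam_down_test_der_diam_dPath {ψ : NodeExpr A} {α : PathExpr A}
    (h : NLe ψ (.diam α)) :
    NDer (.diam (.comp .down (.test ψ))) (.diam (dPath ψ α)) := by
  have hψ : NDer ψ (.diam (.comp (.test ψ) α)) :=
    ((le_conj (.refl ψ) h).antisymm (conj_le_left _ _)).trans (diam_test_comp ψ α).symm
  exact (NDer.congr_diam (.congr_comp (.refl _) (.congr_test hψ))).trans (NDer.ndAx4 _ _).symm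

theorem conj_diam_le_eqTest_nOr_neqTest (γ δ : PathExpr A) :
    NLe (.conj (.diam γ) (.diam δ)) (nOr (.eqTest γ δ) (.neqTest γ δ)) :=
  NLe.congr (.congr_conj (.eqAx6 γ) (.eqAx6 δ)) (.refl _) (NDer.neqAx6 γ δ γ δ)

theorem der_botN_of_le_diam (γ δ : PathExpr A) {ρ : NodeExpr A} (h : NLe ρ (.diam δ)) :
    NDer (.conj (.conj (.conj (.neg (.eqTest γ δ)) (.neg (.neqTest γ δ))) (.diam γ)) ρ)
      botN := by
  set χ := NodeExpr.conj (.conj (.conj (.neg (.eqTest γ δ)) (.neg (.neqTest γ δ))) (.diam γ)) ρ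
  have hneg : NLe χ (.conj (.neg (.eqTest γ δ)) (.neg (.neqTest γ δ))) :=
    (conj_le_left _ _).trans (conj_le_left _ _)
  have hγ : NLe χ (.diam γ) := (conj_le_left _ _).trans (conj_le_right _ _)
  have hδ : NLe χ (.diam δ) := (conj_le_right _ _).trans h
  have heq : NLe χ (.eqTest γ δ) :=
    le_of_le_nOr_of_le_neg ((le_conj hγ hδ).trans (conj_diam_le_eqTest_nOr_neqTest γ δ))
      (hneg.trans (conj_le_right _ _))
  exact der_botN_of_le (le_botN_of_le_neg (hneg.trans (conj_le_left _ _)) heq)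

theorem NLe.of_isConjunct {δ : NodeExpr A} : ∀ {ρ : NodeExpr A}, IsConjunct δ ρ → NLe ρ δ
  | .conj φ ψ, h => (List.mem_append.mp h).elim
      (fun h => (conj_le_left φ ψ).trans (of_isConjunct h))
      (fun h => (conj_le_right φ ψ).trans (of_isConjunct h))
  | .lab _, h | .neg _, h | .diam _, h | .eqTest _ _, h | .neqTest _ _, h =>
      List.eq_of_mem_singleton h ▸ NLe.refl _

theorem isConjunct_eqTest_self_or_neg {n : ℕ} {ψ : NodeExpr A} (hψ : ψ ∈ Nnf A n)
    {α : PathExpr A} (hα : α ∈ Pnf A n) :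
    IsConjunct (.eqTest α α) ψ ∨ IsConjunct (.neg (.eqTest α α)) ψ := by
  cases n with
  | zero =>
    simp only [Nnf, Pnf, NF, Set.mem_ofPred_eq, List.mem_map, List.mem_singleton] at hψ hα
    obtain ⟨a, -, rfl⟩ := hψ
    subst hα
    simp [IsConjunct, conjuncts]
  | succ n =>
    simp only [Nnf, Pnf, NF, Set.mem_ofPred_eq, List.mem_filter, List.mem_flatMap,
      List.mem_map] at hψ hα
    obtain ⟨⟨C, -, a, -, rfl⟩, -⟩ := hψ
    exact isConjunct_mkNF_or_neg a C
      (List.mem_append_left _ (List.mem_flatMap.mpr ⟨α, hα, List.mem_map_of_mem hα⟩))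

end XPath

/-- If `¬⟨γ = ↓[ψ]α⟩ ∧ ¬⟨γ ≠ ↓[ψ]α⟩ ∧ ⟨γ⟩ ∧ ⟨↓[ψ]⟩` is `XP`-consistent, then
`¬⟨α = α⟩` is a conjunct of `ψ`. -/
theorem XPath.lemma5 {A : Type} [Fintype A] (hA : 1 < Fintype.card A)
    (n : ℕ) (ψ : NodeExpr A) (hψ : ψ ∈ Nnf A n)
    (α : PathExpr A) (hα : α ∈ Pnf A n)
    (γ : PathExpr A) (hγ : γ ∈ Pnf A (n + 1))
    (hcons : NConsistent (NodeExpr.conj (.conj (.conj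
        (.neg (.eqTest γ (dPath ψ α))) (.neg (.neqTest γ (dPath ψ α))))
        (.diam γ)) (.diam (.comp .down (.test ψ))))) :
    IsConjunct (.neg (.eqTest α α)) ψ := by
  refine (isConjunct_eqTest_self_or_neg hψ hα).resolve_left fun hpos => hcons ?_
  have hψα : NLe ψ (.diam α) := (NLe.of_isConjunct hpos).trans_der (.eqAx6 α)
  exact der_botN_of_le_diam γ (dPath ψ α) (.of_der (diam_down_test_der_diam_dPath hψα))
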